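/- Define the polynomials d₂(m₁,m₂) = m₁² + m₁m₂ + m₂² + 3m₁ + 3m₂ and d₃(m₁,m₂) = (1/9)(m₁ + 2m₂)(6 + 2m₁ + m₂)(m₁ − m₂ − 3). Let u_1,…,u_k ∈ ℂ[x,y]^n be vectors of polynomials such that for all sufficiently large integers m₁ and m₂ the evaluated vectors u_i(d₂(m₁,m₂), d₃(m₁,m₂)) ∈ ℂⁿ, i = 1,…,k, are linearly dependent over ℂ. Then u_1,…,u_k are linearly dependent over the ring ℂ[x,y]. -/

import Mathlib

/-!
If `u` were linearly independent over `ℂ[x,y]`, then, passing to the fraction field, some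
`k × k` minor `D` of the matrix `(u i j)` would be a nonzero polynomial. At every grid point the
evaluated vectors are dependent, so `D` vanishes at `(d₂, d₃)(m₁, m₂)`; thus `D ∘ (d₂, d₃)`
vanishes on a product of two infinite sets and is zero. As `(d₂, d₃) : ℂ² → ℂ²` is surjective,
`D` vanishes on all of `ℂ²`, so `D = 0`.
-/

/-- The eigenvalue of the quadratic Casimir generator on the irreducible representation of
`𝔰𝔩₃` with highest weight `(m₁, m₂)`. -/
noncomputable def casimirD2 (m₁ m₂ : ℂ) : ℂ :=
  m₁ ^ 2 + m₁ * m₂ + m₂ ^ 2 + 3 * m₁ + 3 * m₂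

/-- The eigenvalue of the cubic Casimir generator on the irreducible representation of
`𝔰𝔩₃` with highest weight `(m₁, m₂)`. -/
noncomputable def casimirD3 (m₁ m₂ : ℂ) : ℂ :=
  (1 / 9) * (m₁ + 2 * m₂) * (6 + 2 * m₁ + m₂) * (m₁ - m₂ - 3)

open Polynomial in
/- In the coordinates `r = m₁ + 2m₂`, `p = 2m₁ + m₂ - 3` one has `3d₂ = r² - pr + p² + 9p + 18`
and `9d₃ = r(p - r)(p + 9)`. Eliminating `r(p - r)` leaves a cubic for `p`, then a quadratic
for `r`. -/
theorem exists_casimir_eq (a b : ℂ) : ∃ z₁ z₂ : ℂ, casimirD2 z₁ z₂ = a ∧ casimirD3 z₁ z₂ = b := by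
  obtain ⟨p, hp⟩ := Complex.exists_root
    (f := C 1 * X ^ 3 + C 18 * X ^ 2 + C (99 - 3 * a) * X + C (162 - 27 * a - 9 * b))
    (by rw [degree_cubic one_ne_zero]; decide)
  obtain ⟨r, hr⟩ := Complex.exists_root
    (f := C 1 * X ^ 2 + C (-p) * X + C (p ^ 2 + 9 * p + 18 - 3 * a))
    (by rw [degree_quadratic one_ne_zero]; decide)
  simp only [IsRoot, eval_add, eval_mul, eval_pow, eval_C, eval_X, one_mul] at hp hr
  refine ⟨(2 * p - r + 6) / 3, (2 * r - p - 3) / 3, ?_, ?_⟩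
  · unfold casimirD2
    linear_combination (1 / 3 : ℂ) * hr
  · unfold casimirD3
    linear_combination (1 / 9 : ℂ) * hp - ((p + 9) / 9) * hr

open MvPolynomial Module

namespace Matrix

variable {m n : Type*} [Fintype m] [DecidableEq m]

theorem linearIndependent_of_det_submatrix_ne_zero {K : Type*} [Field K] {A : Matrix m n K}
    {f : m → n} (h : (A.submatrix id f).det ≠ 0) : LinearIndependent K A :=
  have hsub : LinearIndependent K (A.submatrix id f) :=
    linearIndependent_rows_iff_isUnit.2 ((isUnit_iff_isUnit_det _).2 h.isUnit)
  hsub.of_comp (LinearMap.funLeft K K f)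

theorem exists_det_submatrix_ne_zero_of_linearIndependent {K : Type*} [Field K] [Fintype n]
    {B : Matrix m n K} (hB : LinearIndependent K B) : ∃ f : m → n, (B.submatrix id f).det ≠ 0 := by
  obtain ⟨κ, a, -, hspan, hli⟩ := exists_linearIndependent' K B.col
  have hcols : Submodule.span K (Set.range B.col) = ⊤ := by
    apply Submodule.eq_top_of_finrank_eq
    rw [← rank_eq_finrank_span_cols, hB.rank_matrix, finrank_fintype_fun_eq_card]
  let b : Basis κ K (m → K) := .mk hli (by rw [hspan, hcols])
  let e : m ≃ κ := (Pi.basisFun K m).indexEquiv b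
  refine ⟨a ∘ e, fun h0 => ?_⟩
  have hunit : IsUnit (B.submatrix id (a ∘ e)) :=
    linearIndependent_cols_iff_isUnit.1 (hli.comp e e.injective)
  exact ((isUnit_iff_isUnit_det _).1 hunit).ne_zero h0

theorem exists_det_submatrix_ne_zero_of_linearIndependent_of_isDomain {R : Type*} [CommRing R]
    [IsDomain R] [Fintype n] {B : Matrix m n R} (hB : LinearIndependent R B) :
    ∃ f : m → n, (B.submatrix id f).det ≠ 0 := by
  let K := FractionRing R
  let ψ : (n → R) →ₗ[R] (n → K) := (Algebra.linearMap R K).compLeft n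
  have hψ : Function.Injective ψ := (IsFractionRing.injective R K).comp_left
  have hBK : LinearIndependent K (B.map (algebraMap R K)) :=
    (LinearIndependent.iff_fractionRing R K).1 (hB.map' ψ (LinearMap.ker_eq_bot.2 hψ))
  obtain ⟨f, hf⟩ := exists_det_submatrix_ne_zero_of_linearIndependent hBK
  refine ⟨f, fun h0 => hf ?_⟩
  rw [submatrix_map, ← RingHom.mapMatrix_apply, ← RingHom.map_det, h0, map_zero]

theorem linearIndependent_map_of_map_det_submatrix_ne_zero {R K : Type*} [CommRing R] [Field K]
    (φ : R →+* K) {B : Matrix m n R} {f : m → n} (h : φ (B.submatrix id f).det ≠ 0) :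
    LinearIndependent K (B.map φ) :=
  linearIndependent_of_det_submatrix_ne_zero (f := f) (by rwa [φ.map_det] at h)

end Matrix

noncomputable def casimirMap : Fin 2 → MvPolynomial (Fin 2) ℂ :=
  ![X 0 ^ 2 + X 0 * X 1 + X 1 ^ 2 + 3 * X 0 + 3 * X 1,
    C (1 / 9) * (X 0 + 2 * X 1) * (6 + 2 * X 0 + X 1) * (X 0 - X 1 - 3)]

theorem eval_bind₁_casimirMap (z : Fin 2 → ℂ) (p : MvPolynomial (Fin 2) ℂ) :
    eval z (bind₁ casimirMap p) = eval ![casimirD2 (z 0) (z 1), casimirD3 (z 0) (z 1)] p := by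
  have hcomp : eval z ∘ casimirMap = ![casimirD2 (z 0) (z 1), casimirD3 (z 0) (z 1)] := by
    funext i
    fin_cases i <;> simp [casimirMap, casimirD2, casimirD3]
  rw [bind₁, aeval_def, algebraMap_eq, ← eval_assoc, hcomp]

theorem eq_zero_of_eval_casimir_eq_zero (M : ℤ) {p : MvPolynomial (Fin 2) ℂ}
    (h : ∀ m₁ m₂ : ℤ, M ≤ m₁ → M ≤ m₂ → eval ![casimirD2 m₁ m₂, casimirD3 m₁ m₂] p = 0) :
    p = 0 := by
  have hgrid : bind₁ casimirMap p = 0 := by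
    refine funext_set (fun _ => Int.cast '' Set.Ici M)
      (fun _ => (Set.Ici_infinite M).image Int.cast_injective.injOn) fun x hx => ?_
    obtain ⟨m₁, hm₁, hx₀⟩ := hx 0 trivial
    obtain ⟨m₂, hm₂, hx₁⟩ := hx 1 trivial
    rw [eval_bind₁_casimirMap, ← hx₀, ← hx₁, map_zero]
    exact h m₁ m₂ hm₁ hm₂
  refine MvPolynomial.funext fun x => ?_
  obtain ⟨z₁, z₂, h₂, h₃⟩ := exists_casimir_eq (x 0) (x 1)
  have hz := congrArg (eval ![z₁, z₂]) hgrid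
  simp only [eval_bind₁_casimirMap, Matrix.cons_val_zero, Matrix.cons_val_one, map_zero] at hz
  have hx : ![x 0, x 1] = x := by
    funext i
    fin_cases i <;> rfl
  rwa [h₂, h₃, hx, ← map_zero (eval x)] at hz

/-- vectors of polynomials in two variables whose evaluations at the points
`(d₂(m₁,m₂), d₃(m₁,m₂))` are linearly dependent over ℂ for all sufficiently large integers
`m₁, m₂` are linearly dependent over `ℂ[x,y]`. -/
theorem stmt_17 (k n : ℕ) (u : Fin k → Fin n → MvPolynomial (Fin 2) ℂ)
    (h : ∃ M : ℤ, ∀ m₁ m₂ : ℤ, M ≤ m₁ → M ≤ m₂ →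
      ¬ LinearIndependent ℂ (fun i : Fin k => fun j : Fin n =>
        MvPolynomial.eval ![casimirD2 (m₁ : ℂ) (m₂ : ℂ), casimirD3 (m₁ : ℂ) (m₂ : ℂ)] (u i j))) :
    ¬ LinearIndependent (MvPolynomial (Fin 2) ℂ) u := by
  obtain ⟨M, hM⟩ := h
  intro hu
  obtain ⟨f, hf⟩ := Matrix.exists_det_submatrix_ne_zero_of_linearIndependent_of_isDomain hu
  refine hf (eq_zero_of_eval_casimir_eq_zero M fun m₁ m₂ hm₁ hm₂ => ?_)
  by_contra hne
  exact hM m₁ m₂ hm₁ hm₂ (Matrix.linearIndependent_map_of_map_det_submatrix_ne_zero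
    (eval ![casimirD2 m₁ m₂, casimirD3 m₁ m₂]) hne)
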